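/- Fix a, b ∈ ℤ/4ℤ, R = R_{a+bw}, n ≥ 1, and a finite set S ⊆ Rⁿ, and let C be the R-submodule of Rⁿ generated by S. Then the DNA code Φ(C) = {Φ(c) : c ∈ C} ⊆ Σⁿ is closed under the reversal operation y ↦ y^R if and only if 3·g^r ∈ C for every g ∈ S. -/

import Mathlib

open Polynomial

/-- The base ring ℤ/4ℤ. -/
abbrev Z4 := ZMod 4

/-- The polynomial X² − (a + bX) over ℤ/4ℤ. -/
noncomputable def wPoly (a b : Z4) : Z4[X] := X ^ 2 - (C b * X + C a)

/-- The ring R_{a+bw} = (ℤ/4ℤ)[X]/(X² − (a + bX)); every element is uniquely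
x₀ + x₁·w with x₀, x₁ ∈ ℤ/4ℤ, and w² = a + b·w. -/
abbrev Rw (a b : Z4) : Type := AdjoinRoot (wPoly a b)

/-- The element w of R_{a+bw}. -/
noncomputable def ww (a b : Z4) : Rw a b := AdjoinRoot.root _

instance (a b : Z4) : Nonempty (Rw a b) := ⟨0⟩

/-- The Gau map expressed on coordinates:  ψ(x₀, x₁) is the DNA pair (in Fin 4 × Fin 4,
with A,G,C,T encoded as 0,1,2,3) assigned to the ring element x₀ + x₁·w. -/
def psi (p : Z4 × Z4) : Fin 4 × Fin 4 :=
  match p.1.val, p.2.val with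
  | 0, 0 => (3, 3)
  | 1, 0 => (0, 1)
  | 2, 0 => (2, 2)
  | 3, 0 => (1, 0)
  | 0, 1 => (0, 2)
  | 1, 1 => (0, 3)
  | 2, 1 => (1, 3)
  | 3, 1 => (1, 2)
  | 0, 2 => (1, 1)
  | 1, 2 => (2, 3)
  | 2, 2 => (0, 0)
  | 3, 2 => (3, 2)
  | 0, 3 => (2, 0)
  | 1, 3 => (2, 1)
  | 2, 3 => (3, 1)
  | _, _ => (3, 0)

/-- `phi` is a Gau map on R_{a+bw}: on the element x₀ + x₁·w it takes the value
prescribed by the table ψ. -/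
def IsGauMap (a b : Z4) (phi : Rw a b → Fin 4 × Fin 4) : Prop :=
  ∀ x₀ x₁ : Z4,
    phi (algebraMap Z4 (Rw a b) x₀ + algebraMap Z4 (Rw a b) x₁ * ww a b) = psi (x₀, x₁)

/-- Coordinatewise extension Φ of a Gau map φ to vectors. -/
def PhiV (a b : Z4) (phi : Rw a b → Fin 4 × Fin 4) (n : ℕ) (x : Fin n → Rw a b) :
    Fin n → Fin 4 × Fin 4 :=
  fun j => phi (x j)

/-- Inverse Φ⁻¹ of the coordinatewise extension of a Gau map. -/
noncomputable def PhiVinv (a b : Z4) (phi : Rw a b → Fin 4 × Fin 4) (n : ℕ)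
    (y : Fin n → Fin 4 × Fin 4) : Fin n → Rw a b :=
  fun j => Function.invFun phi (y j)

/-- DNA-string reversal y ↦ y^R on Σⁿ: read the length-2n DNA string backwards,
i.e. reverse the order of the pairs and swap the two entries of each pair. -/
def dnaRev (n : ℕ) (y : Fin n → Fin 4 × Fin 4) : Fin n → Fin 4 × Fin 4 :=
  fun j => ((y j.rev).2, (y j.rev).1)

/-- Watson–Crick complement y ↦ y^C on Σⁿ. -/
def dnaCompl (n : ℕ) (y : Fin n → Fin 4 × Fin 4) : Fin n → Fin 4 × Fin 4 :=
  fun j => (3 - (y j).1, 3 - (y j).2)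

/-- Vector reversal g ↦ g^r on Rⁿ. -/
def vecRev {α : Type*} (n : ℕ) (x : Fin n → α) : Fin n → α :=
  fun j => x j.rev

/-!
Multiplication by `3 = -1` sends `x₀ + x₁w` to `3x₀ + 3x₁w`, and the Gau table is built so that
this swaps the two nucleotides of `φ(x₀ + x₁w)`. Hence `Φ` intertwines the DNA reversal `y ↦ y^R`
with the `R`-linear map `g ↦ 3 • g^r`. Since `Φ` is injective, `Φ(C)` is closed under reversal
iff `C` is stable under that linear map, which for `C = span S` is a condition on `S` alone.
-/

theorem AdjoinRoot.exists_eq_algebraMap_add_algebraMap_mul_root {R : Type*} [CommRing R]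
    {p : R[X]} (hp : p.Monic) (hdeg : p.natDegree = 2) (u : AdjoinRoot p) :
    ∃ x₀ x₁ : R, u = algebraMap R _ x₀ + algebraMap R _ x₁ * root p := by
  obtain ⟨f, rfl⟩ := mk_surjective u
  have hf : (f %ₘ p).natDegree ≤ 1 := by
    have := natDegree_modByMonic_lt f hp (by rintro rfl; simp at hdeg)
    omega
  refine ⟨(f %ₘ p).coeff 0, (f %ₘ p).coeff 1, ?_⟩
  rw [← mk_leftInverse hp (mk p f), modByMonicHom_mk, eq_X_add_C_of_natDegree_le_one hf]
  simp [add_comm]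

theorem Function.Semiconj.mapsTo_image_iff {α β : Type*} {f : α → β} {fa : α → α} {fb : β → β}
    {s t : Set α} (h : Semiconj f fa fb) (hf : Injective f) :
    Set.MapsTo fb (f '' s) (f '' t) ↔ Set.MapsTo fa s t := by
  refine ⟨fun hst x hx => ?_, h.mapsTo_image⟩
  obtain ⟨y, hy, hfy⟩ := hst (Set.mem_image_of_mem f hx)
  rw [← h x] at hfy
  exact hf hfy ▸ hy

theorem Submodule.mapsTo_span_iff {R M : Type*} [Semiring R] [AddCommMonoid M] [Module R M]
    (f : M →ₗ[R] M) (s : Set M) :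
    Set.MapsTo f (span R s) (span R s) ↔ Set.MapsTo f s (span R s) :=
  ⟨fun h => h.mono_left subset_span, fun h => by simpa using mapsTo_span h⟩

theorem wPoly_monic (a b : Z4) : (wPoly a b).Monic := by
  unfold wPoly; monicity!

theorem natDegree_wPoly (a b : Z4) : (wPoly a b).natDegree = 2 := by
  unfold wPoly; compute_degree!

theorem Rw.exists_eq_add_mul_ww {a b : Z4} (u : Rw a b) :
    ∃ x₀ x₁ : Z4, u = algebraMap Z4 (Rw a b) x₀ + algebraMap Z4 (Rw a b) x₁ * ww a b :=
  AdjoinRoot.exists_eq_algebraMap_add_algebraMap_mul_root (wPoly_monic a b) (natDegree_wPoly a b) u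

theorem psi_injective : Function.Injective psi := by decide

theorem psi_three_mul (x₀ x₁ : Z4) : psi (3 * x₀, 3 * x₁) = (psi (x₀, x₁)).swap := by
  revert x₀ x₁; decide

namespace IsGauMap

variable {a b : Z4} {phi : Rw a b → Fin 4 × Fin 4}

theorem injective (hphi : IsGauMap a b phi) : Function.Injective phi := by
  intro u v huv
  obtain ⟨u₀, u₁, rfl⟩ := Rw.exists_eq_add_mul_ww u
  obtain ⟨v₀, v₁, rfl⟩ := Rw.exists_eq_add_mul_ww v
  rw [hphi, hphi] at huv
  obtain ⟨rfl, rfl⟩ := Prod.mk.inj (psi_injective huv)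
  rfl

theorem apply_three_mul (hphi : IsGauMap a b phi) (u : Rw a b) : phi (3 * u) = (phi u).swap := by
  obtain ⟨x₀, x₁, rfl⟩ := Rw.exists_eq_add_mul_ww u
  have h3 : (3 : Rw a b) = algebraMap Z4 (Rw a b) 3 := (map_ofNat _ 3).symm
  have hmul : 3 * (algebraMap Z4 (Rw a b) x₀ + algebraMap Z4 (Rw a b) x₁ * ww a b) =
      algebraMap Z4 (Rw a b) (3 * x₀) + algebraMap Z4 (Rw a b) (3 * x₁) * ww a b := by
    rw [map_mul, map_mul, ← h3]; ring
  rw [hmul, hphi, hphi, psi_three_mul]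

theorem semiconj_PhiV (hphi : IsGauMap a b phi) (n : ℕ) :
    Function.Semiconj (PhiV a b phi n) (fun x => (3 : Rw a b) • vecRev n x) (dnaRev n) :=
  fun x => funext fun j => hphi.apply_three_mul (x j.rev)

end IsGauMap

theorem dna_code_reversible_iff_general (a b : Z4) (n : ℕ)
    (phi : Rw a b → Fin 4 × Fin 4) (hphi : IsGauMap a b phi)
    (S : Set (Fin n → Rw a b)) :
    (∀ y ∈ PhiV a b phi n '' (Submodule.span (Rw a b) S : Set (Fin n → Rw a b)),
        dnaRev n y ∈ PhiV a b phi n '' (Submodule.span (Rw a b) S : Set (Fin n → Rw a b))) ↔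
      ∀ g ∈ S, (3 : Rw a b) • vecRev n g ∈ Submodule.span (Rw a b) S := by
  let revSmul : (Fin n → Rw a b) →ₗ[Rw a b] Fin n → Rw a b :=
    (3 : Rw a b) • LinearMap.funLeft (Rw a b) (Rw a b) Fin.rev
  calc _ ↔ Set.MapsTo revSmul (Submodule.span (Rw a b) S) (Submodule.span (Rw a b) S) :=
        (hphi.semiconj_PhiV n).mapsTo_image_iff hphi.injective.comp_left
    _ ↔ _ := Submodule.mapsTo_span_iff revSmul S

/-- for the R-submodule C of Rⁿ generated by a finite set S, the DNA code
Φ(C) is closed under the reversal y ↦ y^R iff 3·g^r ∈ C for every generator g ∈ S. -/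
theorem dna_code_reversible_iff (a b : Z4) (n : ℕ) (hn : 1 ≤ n)
    (phi : Rw a b → Fin 4 × Fin 4) (hphi : IsGauMap a b phi)
    (S : Set (Fin n → Rw a b)) (hS : S.Finite) :
    (∀ y ∈ PhiV a b phi n '' (Submodule.span (Rw a b) S : Set (Fin n → Rw a b)),
        dnaRev n y ∈ PhiV a b phi n '' (Submodule.span (Rw a b) S : Set (Fin n → Rw a b))) ↔
      ∀ g ∈ S, (3 : Rw a b) • vecRev n g ∈ Submodule.span (Rw a b) S :=
  dna_code_reversible_iff_general a b n phi hphi S
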